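/- arXiv:1508.05923 — 5 statements merged into one kernel-verified Lean document; each statement's English description precedes it below -/
import Mathlib

section
/- Let λ be a nonzero integer and d ≥ 1, p > 2 + 4/d. Then the series Σ_{q ≥ 1} Σ_{(a,b₁,…,b_d) ∈ [q]^{d+1}, gcd(a,b₁,…,b_d,q)=1} Π_{j=1}^d |q^{-1} S(λa, λb_j; q)|^p converges, where S(a,b;q) = Σ_{u mod q} e((au² + bu)/q). -/
open Finset

noncomputable def e (x : ℝ) : ℂ := Complex.exp (2 * Real.pi * Complex.I * x)

/-- Quadratic Gauss sum `S(a,b;q) = ∑_{u mod q} e((a u² + b u)/q)`. -/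
noncomputable def gaussSum' (a b : ℤ) (q : ℕ) : ℂ :=
  ∑ u ∈ Finset.range q, e (((a * u ^ 2 + b * u : ℤ) : ℝ) / q)

lemma gaussSum'_eq (a b : ℤ) (q : ℕ) [NeZero q] :
    gaussSum' a b q =
      ∑ u : ZMod q, ZMod.stdAddChar ((a : ZMod q) * u ^ 2 + (b : ZMod q) * u) := by
  rw [gaussSum']
  refine Finset.sum_nbij' (fun i => (i : ZMod q)) (fun w => w.val) ?_ ?_ ?_ ?_ ?_
  · intro i _; exact Finset.mem_univ _
  · intro w _; exact Finset.mem_range.mpr (ZMod.val_lt w)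
  · intro i hi; exact ZMod.val_cast_of_lt (Finset.mem_range.mp hi)
  · intro w _; exact ZMod.natCast_rightInverse w
  · intro i _
    have : ((a : ZMod q) * (i : ZMod q) ^ 2 + (b : ZMod q) * (i : ZMod q))
        = ((a * i ^ 2 + b * i : ℤ) : ZMod q) := by push_cast; ring
    rw [this, ZMod.stdAddChar_coe]
    rw [e]
    push_cast
    ring_nf


lemma gauss_shift (a b : ℤ) (q : ℕ) [NeZero q] (w : ZMod q) (hw : (a : ZMod q) * w = 0) :
    gaussSum' a b q = ZMod.stdAddChar ((b : ZMod q) * w) * gaussSum' a b q := by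
  rw [gaussSum'_eq, Finset.mul_sum]
  refine Fintype.sum_equiv (Equiv.subRight w) _ _ ?_
  intro u
  have h1 : (a : ZMod q) * u ^ 2 + (b : ZMod q) * u
      = ((b : ZMod q) * w) + ((a : ZMod q) * (u - w) ^ 2 + (b : ZMod q) * (u - w)) := by
    have h2 : (a : ZMod q) * u ^ 2 + (b : ZMod q) * u
        - (((b : ZMod q) * w) + ((a : ZMod q) * (u - w) ^ 2 + (b : ZMod q) * (u - w)))
        = ((a : ZMod q) * w) * (2 * u - w) := by ring
    rw [hw, zero_mul] at h2
    exact sub_eq_zero.mp h2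
  rw [h1, AddChar.map_add_eq_mul]
  rfl

lemma gauss_vanish (a b : ℤ) (q : ℕ) [NeZero q]
    (hnd : ¬ ((Int.gcd a q : ℤ) ∣ b)) : gaussSum' a b q = 0 := by
  set g : ℕ := Int.gcd a q with hg
  have hq0 : (q : ℤ) ≠ 0 := by exact_mod_cast (NeZero.ne q)
  have hg0 : g ≠ 0 := fun h => hq0 ((Int.gcd_eq_zero_iff.mp h).2)
  have hgq : (g : ℤ) ∣ (q : ℤ) := Int.gcd_dvd_right _ _
  obtain ⟨q', hq'⟩ := hgq
  have hq'0 : (q' : ℤ) ≠ 0 := by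
    rintro rfl; simp at hq'; exact hq0 (by exact_mod_cast hq')
  have hga : (g : ℤ) ∣ a := Int.gcd_dvd_left _ _
  obtain ⟨a', ha'⟩ := hga
  have haw : (a : ZMod q) * ((q' : ℤ) : ZMod q) = 0 := by
    have h : ((a * q' : ℤ) : ZMod q) = 0 := by
      rw [ZMod.intCast_zmod_eq_zero_iff_dvd]
      exact ⟨a', by rw [ha', hq']; ring⟩
    push_cast at h ⊢
    rw [← h]
  have hshift := gauss_shift a b q ((q' : ℤ) : ZMod q) haw
  have hpi : (2 * (Real.pi : ℂ) * Complex.I) ≠ 0 := by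
    simp [Real.pi_ne_zero, Complex.I_ne_zero]
  have hqC : (q : ℂ) ≠ 0 := by exact_mod_cast hq0
  have hchar : ZMod.stdAddChar ((b : ZMod q) * ((q' : ℤ) : ZMod q)) ≠ 1 := by
    have hcast : (b : ZMod q) * ((q' : ℤ) : ZMod q) = ((b * q' : ℤ) : ZMod q) := by
      push_cast; ring
    rw [hcast, ZMod.stdAddChar_coe]
    intro h1
    rw [Complex.exp_eq_one_iff] at h1
    obtain ⟨n, hn⟩ := h1
    apply hnd
    rw [div_eq_iff hqC] at hn
    have h2 : (2 * (Real.pi:ℂ) * Complex.I) * ((b * q' : ℤ) : ℂ)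
        = (2 * (Real.pi:ℂ) * Complex.I) * (((n * q : ℤ)) : ℂ) := by
      push_cast at hn ⊢; linear_combination hn
    have h3 : b * q' = n * q := by exact_mod_cast mul_left_cancel₀ hpi h2
    have h4 : b * q' = ((g : ℤ) * n) * q' := by rw [h3, hq']; ring
    exact ⟨n, mul_right_cancel₀ hq'0 h4⟩
  set S := gaussSum' a b q
  set c := ZMod.stdAddChar ((b : ZMod q) * ((q' : ℤ) : ZMod q))
  have hz : S * (1 - c) = 0 := by rw [mul_sub, mul_one]; rw [mul_comm, ← hshift]; ring
  rcases mul_eq_zero.mp hz with h | h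
  · exact h
  · exact absurd (by linear_combination -h : c = 1) hchar


lemma count_ker (c : ℤ) (q : ℕ) [NeZero q] :
    (Finset.univ.filter (fun w : ZMod q => (c : ZMod q) * w = 0)).card ≤ Int.gcd c q := by
  classical
  set N : ℕ := Int.gcd c q with hN
  have hq0 : q ≠ 0 := NeZero.ne q
  have hN0 : N ≠ 0 := fun h => hq0 (by exact_mod_cast (Int.gcd_eq_zero_iff.mp h).2)
  set C : ℕ := c.natAbs with hC
  have hNgcd : N = Nat.gcd C q := by rw [hN, Int.gcd, Int.natAbs_natCast]
  set q₀ : ℕ := q / N with hq₀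
  have hNq : N ∣ q := hNgcd ▸ Nat.gcd_dvd_right C q
  have hq₀N : q = N * q₀ := (Nat.mul_div_cancel' hNq).symm
  have hq₀0 : q₀ ≠ 0 := by rintro h; rw [h, mul_zero] at hq₀N; exact hq0 hq₀N
  -- each w in the filter has q₀ ∣ w.val
  have key : ∀ w : ZMod q, (c : ZMod q) * w = 0 → q₀ ∣ w.val := by
    intro w hw
    have h1 : (q : ℤ) ∣ c * w.val := by
      rw [← ZMod.intCast_zmod_eq_zero_iff_dvd]
      push_cast
      rw [show ((w.val : ℕ) : ZMod q) = w from ZMod.natCast_rightInverse w]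
      exact hw
    have h2 : q ∣ C * w.val := by
      have h1' := Int.natAbs_dvd_natAbs.mpr h1
      rwa [Int.natAbs_mul, Int.natAbs_natCast, Int.natAbs_natCast] at h1'
    have h3 : q₀ ∣ (C / N) * w.val := by
      obtain ⟨k, hk⟩ := h2
      refine ⟨k, ?_⟩
      have hNC : N ∣ C := hNgcd ▸ Nat.gcd_dvd_left C q
      apply Nat.eq_of_mul_eq_mul_left (Nat.pos_of_ne_zero hN0)
      calc N * (C / N * w.val) = (N * (C / N)) * w.val := by ring
        _ = C * w.val := by rw [Nat.mul_div_cancel' hNC]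
        _ = q * k := hk
        _ = N * (q₀ * k) := by rw [hq₀N]; ring
    have hcop : Nat.Coprime (C / N) q₀ := by
      rw [hq₀, hNgcd]
      exact Nat.coprime_div_gcd_div_gcd (Nat.pos_of_ne_zero (hNgcd ▸ hN0))
    exact (Nat.Coprime.dvd_of_dvd_mul_left (hcop.symm) h3)
  -- inject into range N via w ↦ w.val / q₀
  have : (Finset.univ.filter (fun w : ZMod q => (c : ZMod q) * w = 0)).card
      ≤ (Finset.range N).card := by
    apply Finset.card_le_card_of_injOn (fun w => w.val / q₀)
    · intro w hw
      simp only [Finset.mem_coe, Finset.mem_filter] at hw ⊢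
      have hd := key w hw.2
      have : w.val < q := ZMod.val_lt w
      rw [Finset.mem_range]
      rw [Nat.div_lt_iff_lt_mul (Nat.pos_of_ne_zero hq₀0)]
      calc w.val < q := this
        _ = N * q₀ := hq₀N
        _ = _ := by ring
    · intro w hw w' hw' hww
      simp only [Finset.mem_coe, Finset.mem_filter] at hw hw'
      dsimp only at hww
      have h1 := Nat.div_mul_cancel (key w hw.2)
      have h2 := Nat.div_mul_cancel (key w' hw'.2)
      have : w.val = w'.val := by rw [← h1, ← h2, hww]
      exact ZMod.val_injective q this
  simpa using this


lemma gauss_sq_le (a b : ℤ) (q : ℕ) [NeZero q] :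
    ‖gaussSum' a b q‖ ^ 2 ≤ (q : ℝ) * Int.gcd (2 * a) q := by
  classical
  set χ := (ZMod.stdAddChar (N := q)) with hχ
  set A : ZMod q := (a : ZMod q) with hA
  set B : ZMod q := (b : ZMod q) with hB
  set f : ZMod q → ZMod q := fun u => A * u ^ 2 + B * u with hf
  set S := gaussSum' a b q with hS
  have hSf : S = ∑ u : ZMod q, χ (f u) := gaussSum'_eq a b q
  have habs1 : ∀ x : ZMod q, ‖χ x‖ = 1 := fun x => by
    rw [hχ, ZMod.stdAddChar_apply]; exact Circle.norm_coe _
  have hconj : ∀ x : ZMod q, (starRingEnd ℂ) (χ x) = χ (-x) := fun x => by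
    have h1 : χ (-x) * χ x = 1 := by rw [← AddChar.map_add_eq_mul]; simp
    rw [← Complex.inv_eq_conj (habs1 x)]
    exact (eq_inv_of_mul_eq_one_left h1).symm
  have hmain : S * (starRingEnd ℂ) S
      = ∑ w : ZMod q, χ (A * w ^ 2 + B * w) * (if 2 * A * w = 0 then (q : ℂ) else 0) := by
    have hconjS : (starRingEnd ℂ) S = ∑ v : ZMod q, χ (-(f v)) := by
      rw [hSf, map_sum]
      exact Finset.sum_congr rfl fun v _ => hconj (f v)
    rw [hconjS, hSf, Finset.sum_mul_sum]
    have hinner : ∀ v : ZMod q, (∑ u : ZMod q, χ (f u) * χ (-(f v)))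
        = ∑ w : ZMod q, χ (A * w ^ 2 + B * w) * χ ((2 * A * w) * v) := by
      intro v
      refine (Fintype.sum_equiv (Equiv.addLeft v) _ _ ?_).symm
      intro w
      rw [← AddChar.map_add_eq_mul, ← AddChar.map_add_eq_mul]
      congr 1
      simp only [Equiv.coe_addLeft, hf]
      ring
    rw [Finset.sum_comm]
    rw [Finset.sum_congr rfl fun v _ => hinner v, Finset.sum_comm]
    refine Finset.sum_congr rfl fun w _ => ?_
    rw [← Finset.mul_sum]
    congr 1
    have : ∀ v : ZMod q, χ ((2 * A * w) * v) = χ (v * (2 * A * w)) := fun v => by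
      rw [mul_comm]
    rw [Finset.sum_congr rfl fun v _ => this v,
      AddChar.sum_mulShift _ (ZMod.isPrimitive_stdAddChar q), ZMod.card]
    split_ifs <;> simp
  have habsS : ‖S‖ ^ 2 = ‖S * (starRingEnd ℂ) S‖ := by
    rw [norm_mul, Complex.norm_conj, sq]
  rw [habsS, hmain]
  calc ‖∑ w : ZMod q, χ (A * w ^ 2 + B * w) * (if 2 * A * w = 0 then (q : ℂ) else 0)‖
      ≤ ∑ w : ZMod q, ‖χ (A * w ^ 2 + B * w) * (if 2 * A * w = 0 then (q : ℂ) else 0)‖ := by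
        exact norm_sum_le _ _
    _ = ∑ w : ZMod q, (if 2 * A * w = 0 then (q : ℝ) else 0) := by
        refine Finset.sum_congr rfl fun w _ => ?_
        rw [norm_mul, habs1, one_mul]
        split_ifs <;> simp
    _ = ((Finset.univ.filter (fun w : ZMod q => 2 * A * w = 0)).card : ℝ) * q := by
        rw [Finset.sum_ite, Finset.sum_const, Finset.sum_const_zero, add_zero,
          nsmul_eq_mul]
    _ ≤ (Int.gcd (2 * a) q : ℝ) * q := by
        have hcard := count_ker (2 * a) q
        have hset : (Finset.univ.filter (fun w : ZMod q => ((2 * a : ℤ) : ZMod q) * w = 0))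
            = (Finset.univ.filter (fun w : ZMod q => 2 * A * w = 0)) := by
          refine Finset.filter_congr fun w _ => ?_
          constructor <;> intro h <;> [skip; skip] <;>
            · convert h using 2 <;> push_cast <;> ring
        rw [hset] at hcard
        have : ((Finset.univ.filter (fun w : ZMod q => 2 * A * w = 0)).card : ℝ)
            ≤ (Int.gcd (2 * a) q : ℝ) := by exact_mod_cast hcard
        exact mul_le_mul_of_nonneg_right this (by positivity)
    _ = (q : ℝ) * Int.gcd (2 * a) q := by ring


lemma factor_bound (m : ℕ) (hm : m ≠ 0) (lam : ℤ) (a bj : ℤ) (q : ℕ) [NeZero q]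
    (p : ℝ) (hp : 0 < p) (hgm : Int.gcd (lam * a) q ∣ m) :
    ‖(q : ℂ)⁻¹ * gaussSum' (lam * a) (lam * bj) q‖ ^ p
      ≤ ((2 * m : ℝ) / q) ^ (p / 2) := by
  have hq0 : (0 : ℝ) < q := by exact_mod_cast Nat.pos_of_ne_zero (NeZero.ne q)
  set S := gaussSum' (lam * a) (lam * bj) q with hSdef
  have habs : ‖(q : ℂ)⁻¹ * S‖ = (q : ℝ)⁻¹ * ‖S‖ := by
    rw [norm_mul, norm_inv, Complex.norm_natCast]
  have hgcd2 : (Int.gcd (2 * (lam * a)) q : ℝ) ≤ 2 * m := by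
    have h1 : Int.gcd (2 * (lam * a)) q = Nat.gcd (2 * (lam * a).natAbs) q := by
      rw [Int.gcd, Int.natAbs_mul]
      norm_num
    have h2 : Nat.gcd (2 * (lam * a).natAbs) q ∣ 2 * Int.gcd (lam * a) q := by
      have : (2 : ℕ) * Int.gcd (lam * a) q = Nat.gcd (2 * (lam * a).natAbs) (2 * q) := by
        rw [Nat.gcd_mul_left]; rfl
      rw [this]
      exact Nat.dvd_gcd (Nat.gcd_dvd_left _ _)
        ((Nat.gcd_dvd_right _ _).trans (dvd_mul_left q 2))
    have h3 : Nat.gcd (2 * (lam * a).natAbs) q ≤ 2 * m := by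
      have hgpos : 0 < Int.gcd (lam * a) q :=
        Int.gcd_pos_iff.mpr (Or.inr (by exact_mod_cast NeZero.ne q))
      refine (Nat.le_of_dvd (by omega) h2).trans ?_
      have := Nat.le_of_dvd (Nat.pos_of_ne_zero hm) hgm
      omega
    rw [h1]; exact_mod_cast h3
  have hsq := gauss_sq_le (lam * a) (lam * bj) q
  have key : ((q : ℝ)⁻¹ * ‖S‖) ^ 2 ≤ (2 * m : ℝ) / q := by
    have h1 : ‖S‖ ^ 2 ≤ (q : ℝ) * (2 * m) :=
      hsq.trans (mul_le_mul_of_nonneg_left hgcd2 hq0.le)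
    have h2 : ((q : ℝ)⁻¹ * ‖S‖) ^ 2 = ‖S‖ ^ 2 * ((q : ℝ) ^ 2)⁻¹ := by
      field_simp
    rw [h2]
    calc ‖S‖ ^ 2 * ((q : ℝ) ^ 2)⁻¹ ≤ ((q : ℝ) * (2 * m)) * ((q : ℝ) ^ 2)⁻¹ := by
          exact mul_le_mul_of_nonneg_right h1 (by positivity)
      _ = (2 * m : ℝ) / q := by field_simp
  have hx0 : (0 : ℝ) ≤ (q : ℝ)⁻¹ * ‖S‖ := by positivity
  have hle : (q : ℝ)⁻¹ * ‖S‖ ≤ Real.sqrt ((2 * m : ℝ) / q) :=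
    (Real.le_sqrt hx0 (by positivity)).mpr key
  calc ‖(q : ℂ)⁻¹ * S‖ ^ p = ((q : ℝ)⁻¹ * ‖S‖) ^ p := by rw [habs]
    _ ≤ (Real.sqrt ((2 * m : ℝ) / q)) ^ p := Real.rpow_le_rpow hx0 hle hp.le
    _ = ((2 * m : ℝ) / q) ^ (p / 2) := by
        rw [Real.sqrt_eq_rpow, ← Real.rpow_mul (by positivity)]
        congr 1
        ring


lemma g_dvd_m (lam : ℤ) (q : ℕ) [NeZero q] (a : ℕ) {d : ℕ} (b : Fin d → ℕ)
    (hcop : Nat.gcd (Nat.gcd a q) (Finset.univ.gcd b) = 1)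
    (hdvd : ∀ j, ((Int.gcd (lam * a) q : ℤ) ∣ lam * b j)) :
    Int.gcd (lam * a) q ∣ lam.natAbs := by
  set m := lam.natAbs with hm
  set g := Int.gcd (lam * a) q with hgdef
  have G : g = Nat.gcd (m * a) q := by
    simp [hgdef, Int.gcd, Int.natAbs_mul, hm]
  have hq : g ∣ q := G ▸ Nat.gcd_dvd_right (m * a) q
  have hb : ∀ j, g ∣ m * b j := by
    intro j
    have h := Int.natAbs_dvd_natAbs.mpr (hdvd j)
    rwa [Int.natAbs_mul, Int.natAbs_natCast, Int.natAbs_natCast] at h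
  have h1 : g ∣ m * Nat.gcd a q := by
    rw [← Nat.gcd_mul_left]
    exact Nat.dvd_gcd (G ▸ Nat.gcd_dvd_left (m * a) q) (hq.trans (dvd_mul_left q m))
  have h2 : g ∣ m * Finset.univ.gcd b := by
    have hmul : (Finset.univ.gcd fun j => m * b j) = m * Finset.univ.gcd b := by
      simpa using (Finset.gcd_mul_left (s := (Finset.univ : Finset (Fin d))) (f := b) (a := m))
    rw [← hmul]
    exact Finset.dvd_gcd fun j _ => hb j
  have h3 : g ∣ m * Nat.gcd (Nat.gcd a q) (Finset.univ.gcd b) := by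
    rw [← Nat.gcd_mul_left]
    exact Nat.dvd_gcd h1 h2
  rwa [hcop, mul_one] at h3


theorem stmt7 (lam : ℤ) (hlam : lam ≠ 0) (d : ℕ) (hd : 1 ≤ d) (p : ℝ)
    (hp : 2 + 4 / d < p) :
    Summable (fun q : ℕ =>
      ∑ a ∈ Finset.Icc 1 q, ∑ b ∈ Fintype.piFinset (fun _ : Fin d => Finset.Icc 1 q),
        if Nat.gcd (Nat.gcd a q) (Finset.univ.gcd b) = 1 then
          ∏ j : Fin d,
            ‖(q : ℂ)⁻¹ * gaussSum' (lam * a) (lam * b j) q‖ ^ p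
        else 0) := by
  classical
  set m : ℕ := lam.natAbs with hm
  have hm0 : m ≠ 0 := Int.natAbs_ne_zero.mpr hlam
  have hdR : (0 : ℝ) < d := by exact_mod_cast hd
  have hp0 : 0 < p := by
    have : (0:ℝ) ≤ 4 / d := by positivity
    linarith
  set s : ℝ := (d : ℝ) + 1 - p / 2 * d with hs_def
  have hs : s < -1 := by
    have h1 : (2 + 4 / (d:ℝ)) * d < p * d := by
      exact mul_lt_mul_of_pos_right hp hdR
    have h2 : (2 + 4 / (d:ℝ)) * d = 2 * d + 4 := by
      field_simp
    rw [h2] at h1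
    rw [hs_def]
    nlinarith
  set K : ℝ := (2 * m : ℝ) ^ (p / 2 * (d : ℝ)) with hK
  have hsummable : Summable (fun q : ℕ => K * (q : ℝ) ^ s) :=
    (Real.summable_nat_rpow.mpr hs).mul_left K
  refine Summable.of_nonneg_of_le ?_ ?_ hsummable
  · intro q
    refine Finset.sum_nonneg fun a _ => Finset.sum_nonneg fun b _ => ?_
    split_ifs
    · exact Finset.prod_nonneg fun j _ => Real.rpow_nonneg (norm_nonneg _) p
    · exact le_refl 0
  · intro q
    rcases Nat.eq_zero_or_pos q with rfl | hq
    · simp [Real.zero_rpow (show s ≠ 0 by linarith)]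
    haveI : NeZero q := ⟨hq.ne'⟩
    have hqR : (0 : ℝ) < q := by exact_mod_cast hq
    set t : ℝ := ((2 * m : ℝ) / q) ^ (p / 2) with ht
    have ht0 : 0 ≤ t := Real.rpow_nonneg (by positivity) _
    have hterm : ∀ a ∈ Finset.Icc 1 q, ∀ b ∈ Fintype.piFinset (fun _ : Fin d => Finset.Icc 1 q),
        (if Nat.gcd (Nat.gcd a q) (Finset.univ.gcd b) = 1 then
          ∏ j : Fin d,
            ‖(q : ℂ)⁻¹ * gaussSum' (lam * a) (lam * b j) q‖ ^ p
        else 0) ≤ t ^ d := by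
      intro a _ b _
      split_ifs with hcop
      · by_cases hdvd : ∀ j, ((Int.gcd (lam * (a:ℤ)) q : ℤ) ∣ lam * (b j : ℤ))
        · have hgm := g_dvd_m lam q a b hcop hdvd
          calc ∏ j : Fin d, ‖(q : ℂ)⁻¹ * gaussSum' (lam * a) (lam * b j) q‖ ^ p
              ≤ ∏ _j : Fin d, t := by
                refine Finset.prod_le_prod (fun j _ => Real.rpow_nonneg (norm_nonneg _) p)
                  (fun j _ => ?_)
                exact factor_bound m hm0 lam a (b j) q p hp0 hgm
            _ = t ^ d := by rw [Finset.prod_const, Finset.card_univ, Fintype.card_fin]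
        · push_neg at hdvd
          obtain ⟨j, hj⟩ := hdvd
          have hzero : gaussSum' (lam * a) (lam * b j) q = 0 := gauss_vanish _ _ q hj
          have hprod : ∏ j : Fin d,
              ‖(q : ℂ)⁻¹ * gaussSum' (lam * a) (lam * b j) q‖ ^ p = 0 := by
            refine Finset.prod_eq_zero (Finset.mem_univ j) ?_
            rw [hzero, mul_zero, norm_zero, Real.zero_rpow hp0.ne']
          rw [hprod]
          exact pow_nonneg ht0 d
      · exact pow_nonneg ht0 d
    have hinner : ∀ a ∈ Finset.Icc 1 q,
        (∑ b ∈ Fintype.piFinset (fun _ : Fin d => Finset.Icc 1 q),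
          if Nat.gcd (Nat.gcd a q) (Finset.univ.gcd b) = 1 then
            ∏ j : Fin d,
              ‖(q : ℂ)⁻¹ * gaussSum' (lam * a) (lam * b j) q‖ ^ p
          else 0) ≤ ((q : ℝ) ^ d) * t ^ d := by
      intro a ha
      calc (∑ b ∈ Fintype.piFinset (fun _ : Fin d => Finset.Icc 1 q),
          if Nat.gcd (Nat.gcd a q) (Finset.univ.gcd b) = 1 then
            ∏ j : Fin d,
              ‖(q : ℂ)⁻¹ * gaussSum' (lam * a) (lam * b j) q‖ ^ p
          else 0)
          ≤ ∑ _b ∈ Fintype.piFinset (fun _ : Fin d => Finset.Icc 1 q), t ^ d :=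
            Finset.sum_le_sum (hterm a ha)
        _ = ((q : ℝ) ^ d) * t ^ d := by
            rw [Finset.sum_const, nsmul_eq_mul]
            congr 1
            rw [Fintype.card_piFinset]
            simp
    calc (∑ a ∈ Finset.Icc 1 q,
        ∑ b ∈ Fintype.piFinset (fun _ : Fin d => Finset.Icc 1 q),
          if Nat.gcd (Nat.gcd a q) (Finset.univ.gcd b) = 1 then
            ∏ j : Fin d,
              ‖(q : ℂ)⁻¹ * gaussSum' (lam * a) (lam * b j) q‖ ^ p
          else 0)
        ≤ ∑ _a ∈ Finset.Icc 1 q, ((q : ℝ) ^ d) * t ^ d := Finset.sum_le_sum hinner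
      _ = (q : ℝ) * (((q : ℝ) ^ d) * t ^ d) := by
          rw [Finset.sum_const, nsmul_eq_mul]
          congr 1
          simp
      _ = K * (q : ℝ) ^ s := by
          have hqe : (q : ℝ) ^ (p / 2 * (d : ℝ)) ≠ 0 := (Real.rpow_pos_of_pos hqR _).ne'
          have e1 : t ^ (d : ℕ) = ((2 * m : ℝ) / q) ^ (p / 2 * (d : ℝ)) := by
            rw [ht, ← Real.rpow_natCast (((2 * m : ℝ) / q) ^ (p / 2)) d,
              ← Real.rpow_mul (by positivity)]
          rw [e1, Real.div_rpow (by positivity) hqR.le, hs_def,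
            show (d : ℝ) + 1 - p / 2 * d = ((d : ℝ) + (1 : ℝ)) + (-(p / 2 * d)) by ring,
            Real.rpow_add hqR, Real.rpow_add hqR, Real.rpow_neg hqR.le,
            Real.rpow_one, Real.rpow_natCast, hK]
          field_simp
end

section
/- Let N ≥ 1, K ≥ 1, d, r ≥ 1, θ > 0, 0 < q < p, and let T be an operator from functions f : [N]^d → C to measurable functions on T^r (the r-torus). Suppose that for every ε > 0, ∫_{T^r} |Tf|^q dm ≤ C_ε N^{dq - K + ε} ‖f‖_∞^q, and that ∫_{|Tf| ≥ N^{d-θ}‖f‖_{L²[N]}} |Tf|^p dm ≤ C N^{dp - K} ‖f‖_{L²[N]}^p, where ‖f‖_{L²[N]} = (N^{-d} Σ_{n ∈ [N]^d} |f(n)|²)^{1/2}. Then ∫_{T^r} |Tf|^p dm ≤ C' N^{dp - K} ‖f‖_{L²[N]}^{p-q} ‖f‖_∞^q for a constant C' depending only on p, q, θ and the constants above. -/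
open MeasureTheory Finset

/-- The fundamental domain `(0,1]^r` of the torus `𝕋^r`. -/
def torusBox (r : ℕ) : Set (Fin r → ℝ) := Set.univ.pi fun _ => Set.Ioc (0:ℝ) 1

/-- The normalized `L²` norm `‖f‖_{L²[N]} = (N^{-d} ∑_{n ∈ [N]^d} |f n|²)^{1/2}`. -/
noncomputable def L2N (d N : ℕ) (f : (Fin d → Fin N) → ℂ) : ℝ :=
  Real.sqrt ((N : ℝ) ^ (-(d : ℝ)) * ∑ n : Fin d → Fin N, ‖f n‖ ^ 2)

/-- The sup norm of `f` over `[N]^d`. -/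
noncomputable def supN (d N : ℕ) (f : (Fin d → Fin N) → ℂ) : ℝ :=
  ⨆ n : Fin d → Fin N, ‖f n‖

lemma rpow_split {x y p q : ℝ} (hx : 0 ≤ x) (hxy : x ≤ y) (hq : 0 < q) (hqp : q < p) :
    x ^ p ≤ x ^ (p - q) * y ^ q := by
  rcases eq_or_lt_of_le hx with h0 | h0
  · rw [← h0, Real.zero_rpow (by linarith), Real.zero_rpow (by linarith), zero_mul]
  · have h : x ^ p = x ^ (p - q) * x ^ q := by
      rw [← Real.rpow_add h0]; ring_nf
    rw [h]
    exact mul_le_mul_of_nonneg_left (Real.rpow_le_rpow hx hxy hq.le)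
      (Real.rpow_nonneg hx _)

lemma supN_nonneg (d N : ℕ) (f : (Fin d → Fin N) → ℂ) : 0 ≤ supN d N f :=
  Real.iSup_nonneg fun _ => norm_nonneg _

lemma L2N_le_supN (d N : ℕ) (hN : 1 ≤ N) (f : (Fin d → Fin N) → ℂ) :
    L2N d N f ≤ supN d N f := by
  have hNpos : (0:ℝ) < N := by exact_mod_cast hN
  have hfle : ∀ n, ‖f n‖ ≤ supN d N f := fun n =>
    le_ciSup (f := fun n => ‖f n‖) (Set.Finite.bddAbove (Set.finite_range _)) n
  have hsum : ∑ n : Fin d → Fin N, ‖f n‖ ^ 2 ≤ (N:ℝ) ^ (d:ℝ) * supN d N f ^ 2 := by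
    have h1 : ∑ n : Fin d → Fin N, ‖f n‖ ^ 2 ≤ ∑ _n : Fin d → Fin N, supN d N f ^ 2 :=
      Finset.sum_le_sum fun n _ => pow_le_pow_left₀ (norm_nonneg _) (hfle n) 2
    refine h1.trans_eq ?_
    rw [Finset.sum_const, Finset.card_univ, nsmul_eq_mul]
    congr 1
    rw [Fintype.card_fun, Fintype.card_fin, Fintype.card_fin]
    push_cast
    exact (Real.rpow_natCast _ _).symm
  have key : (N : ℝ) ^ (-(d : ℝ)) * ∑ n : Fin d → Fin N, ‖f n‖ ^ 2
      ≤ supN d N f ^ 2 := by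
    calc (N : ℝ) ^ (-(d : ℝ)) * ∑ n : Fin d → Fin N, ‖f n‖ ^ 2
        ≤ (N : ℝ) ^ (-(d : ℝ)) * ((N:ℝ) ^ (d:ℝ) * supN d N f ^ 2) :=
          mul_le_mul_of_nonneg_left hsum (Real.rpow_nonneg hNpos.le _)
      _ = supN d N f ^ 2 := by
          rw [← mul_assoc, ← Real.rpow_add hNpos]
          simp
  calc L2N d N f ≤ Real.sqrt (supN d N f ^ 2) := Real.sqrt_le_sqrt key
    _ = supN d N f := Real.sqrt_sq (supN_nonneg d N f)

theorem stmt10 (p q θ K : ℝ) (hθ : 0 < θ) (hq : 0 < q) (hqp : q < p)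
    (hK : 1 ≤ K) (Cε : ℝ → ℝ) (C : ℝ) :
    ∃ C' : ℝ, ∀ (d r N : ℕ), 1 ≤ d → 1 ≤ r → 1 ≤ N →
      ∀ T : ((Fin d → Fin N) → ℂ) → ((Fin r → ℝ) → ℂ),
      ∀ f : (Fin d → Fin N) → ℂ,
      (∀ ε : ℝ, 0 < ε →
        (∫ α in torusBox r, ‖T f α‖ ^ q)
          ≤ Cε ε * (N : ℝ) ^ ((d : ℝ) * q - K + ε) * supN d N f ^ q) →
      ((∫ α in torusBox r ∩
            {α | (N : ℝ) ^ ((d : ℝ) - θ) * L2N d N f ≤ ‖T f α‖}, ‖T f α‖ ^ p)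
          ≤ C * (N : ℝ) ^ ((d : ℝ) * p - K) * L2N d N f ^ p) →
      (∫ α in torusBox r, ‖T f α‖ ^ p)
        ≤ C' * (N : ℝ) ^ ((d : ℝ) * p - K) * L2N d N f ^ (p - q) *
            supN d N f ^ q := by
  have hpq : 0 < p - q := by linarith
  have hp : 0 < p := lt_trans hq hqp
  set ε0 := θ * (p - q) with hε0def
  have hε0 : 0 < ε0 := mul_pos hθ hpq
  refine ⟨max (Cε ε0) 0 + max C 0, ?_⟩
  intro d r N hd hr hN T f h1 h2
  have hNpos : (0:ℝ) < N := by exact_mod_cast hN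
  set L := L2N d N f with hLdef
  set S := supN d N f with hSdef
  have hL0 : 0 ≤ L := Real.sqrt_nonneg _
  have hS0 : 0 ≤ S := supN_nonneg d N f
  have hLS : L ≤ S := L2N_le_supN d N hN f
  have hbox : MeasurableSet (torusBox r) :=
    MeasurableSet.univ_pi fun _ => measurableSet_Ioc
  set μ := volume.restrict (torusBox r) with hμdef
  set g : (Fin r → ℝ) → ℝ := fun α => ‖T f α‖ ^ p with hgdef
  set c : ℝ := (N:ℝ) ^ ((d:ℝ) - θ) * L with hcdef
  have hc0 : 0 ≤ c := mul_nonneg (Real.rpow_nonneg hNpos.le _) hL0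
  set s : Set (Fin r → ℝ) := {α | c ≤ ‖T f α‖} with hsdef
  have hRHS0 : 0 ≤ (max (Cε ε0) 0 + max C 0) * (N : ℝ) ^ ((d : ℝ) * p - K)
      * L ^ (p - q) * S ^ q := by
    have h1' : (0:ℝ) ≤ max (Cε ε0) 0 + max C 0 :=
      add_nonneg (le_max_right _ _) (le_max_right _ _)
    exact mul_nonneg (mul_nonneg (mul_nonneg h1'
      (Real.rpow_nonneg hNpos.le _)) (Real.rpow_nonneg hL0 _)) (Real.rpow_nonneg hS0 _)
  by_cases hInt : Integrable g μ
  swap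
  · calc (∫ α in torusBox r, ‖T f α‖ ^ p) = 0 := integral_undef hInt
      _ ≤ _ := hRHS0
  obtain ⟨g₀, hg₀m, hg₀ae⟩ := hInt.1
  set g' : (Fin r → ℝ) → ℝ := fun x => max (g₀ x) 0 with hg'def
  have hg'm : Measurable g' := hg₀m.measurable.max measurable_const
  have hgae : g' =ᵐ[μ] g := by
    filter_upwards [hg₀ae] with x hx
    have h0 : 0 ≤ g x := Real.rpow_nonneg (norm_nonneg _) _
    simp only [hg'def]
    rw [← hx]
    exact max_eq_left h0
  have hg'0 : ∀ x, 0 ≤ g' x := fun x => le_max_right _ _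
  have hg'int : Integrable g' μ := hInt.congr hgae.symm
  set cq : ℝ := c ^ (p - q) with hcqdef
  have hcq0 : 0 ≤ cq := Real.rpow_nonneg hc0 _
  set h' : (Fin r → ℝ) → ℝ := fun x => min (g' x) (cq * g' x ^ (q / p)) with hh'def
  set φ : (Fin r → ℝ) → ℝ := fun x => g' x - h' x with hφdef
  have hgqm : Measurable (fun x => g' x ^ (q / p)) :=
    (Real.continuous_rpow_const (by positivity)).measurable.comp hg'm
  have hh'm : Measurable h' := hg'm.min (hgqm.const_mul cq)
  have hφm : Measurable φ := hg'm.sub hh'm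
  have hh'0 : ∀ x, 0 ≤ h' x := fun x =>
    le_min (hg'0 x) (mul_nonneg hcq0 (Real.rpow_nonneg (hg'0 x) _))
  have hh'le : ∀ x, h' x ≤ g' x := fun x => min_le_left _ _
  have hφ0 : ∀ x, 0 ≤ φ x := fun x => sub_nonneg.2 (hh'le x)
  have hφle : ∀ x, φ x ≤ g' x := fun x => by
    have := hh'0 x
    simp only [hφdef]
    linarith
  have hfin : IsFiniteMeasure μ := by
    constructor
    rw [hμdef, Measure.restrict_apply_univ, torusBox, volume_pi_pi]
    simp
  have h1int : Integrable (fun _ => (1:ℝ)) μ := integrable_const 1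
  have hqp1 : q / p ≤ 1 := (div_le_one hp).2 hqp.le
  have hqp0 : 0 < q / p := div_pos hq hp
  have hgqint : Integrable (fun x => g' x ^ (q/p)) μ := by
    refine Integrable.mono (h1int.add hg'int) hgqm.aestronglyMeasurable ?_
    refine Filter.Eventually.of_forall fun x => ?_
    simp only [Pi.add_apply, Real.norm_eq_abs]
    rw [abs_of_nonneg (Real.rpow_nonneg (hg'0 x) _),
      abs_of_nonneg (by have := hg'0 x; linarith : (0:ℝ) ≤ 1 + g' x)]
    rcases le_total (g' x) 1 with h | h
    · have h2' : g' x ^ (q/p) ≤ 1 := Real.rpow_le_one (hg'0 x) h hqp0.le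
      have := hg'0 x
      linarith
    · have h2' : g' x ^ (q/p) ≤ g' x ^ (1:ℝ) := Real.rpow_le_rpow_of_exponent_le h hqp1
      rw [Real.rpow_one] at h2'
      linarith
  have hh'int : Integrable h' μ := by
    refine Integrable.mono hg'int hh'm.aestronglyMeasurable ?_
    refine Filter.Eventually.of_forall fun x => ?_
    simp only [Real.norm_eq_abs]
    rw [abs_of_nonneg (hh'0 x), abs_of_nonneg (hg'0 x)]
    exact hh'le x
  have hφint : Integrable φ μ := hg'int.sub hh'int
  have hsplit : ∫ x, g x ∂μ = (∫ x, h' x ∂μ) + ∫ x, φ x ∂μ := by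
    rw [← integral_add hh'int hφint]
    refine integral_congr_ae ?_
    filter_upwards [hgae] with x hx
    simp only [hφdef]
    rw [← hx]
    ring
  have hq_int_bound : ∫ x, g' x ^ (q/p) ∂μ
      ≤ max (Cε ε0) 0 * (N:ℝ)^((d:ℝ)*q - K + ε0) * S ^ q := by
    have heq : ∫ x, g' x ^ (q/p) ∂μ = ∫ α in torusBox r, ‖T f α‖ ^ q := by
      refine integral_congr_ae ?_
      filter_upwards [hgae] with x hx
      rw [hx]
      simp only [hgdef]
      rw [← Real.rpow_mul (norm_nonneg _)]
      congr 1
      field_simp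
    rw [heq]
    refine (h1 ε0 hε0).trans ?_
    have hX : (0:ℝ) ≤ (N:ℝ)^((d:ℝ)*q - K + ε0) * S ^ q :=
      mul_nonneg (Real.rpow_nonneg hNpos.le _) (Real.rpow_nonneg hS0 _)
    rw [mul_assoc, mul_assoc]
    exact mul_le_mul_of_nonneg_right (le_max_left _ _) hX
  have hh'bound : ∫ x, h' x ∂μ
      ≤ cq * (max (Cε ε0) 0 * (N:ℝ)^((d:ℝ)*q - K + ε0) * S ^ q) := by
    calc ∫ x, h' x ∂μ ≤ ∫ x, cq * g' x ^ (q/p) ∂μ :=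
        integral_mono hh'int (hgqint.const_mul cq) (fun x => min_le_right _ _)
      _ = cq * ∫ x, g' x ^ (q/p) ∂μ := integral_const_mul cq _
      _ ≤ _ := mul_le_mul_of_nonneg_left hq_int_bound hcq0
  set u : Set (Fin r → ℝ) := {x | φ x ≠ 0} with hudef
  set n : Set (Fin r → ℝ) := {x | g' x ≠ g x} with hndef
  have hn0 : μ n = 0 := by
    have h := hgae
    rw [Filter.EventuallyEq, ae_iff] at h
    exact h
  have husub : u ⊆ s ∪ n := by
    intro x hx
    by_cases hxn : g' x = g x
    · left
      have hne : h' x ≠ g' x := fun h => hx (by simp [hφdef, h])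
      have hlt : cq * g' x ^ (q/p) < g' x := by
        rcases lt_or_ge (cq * g' x ^ (q/p)) (g' x) with h | h
        · exact h
        · exact absurd (min_eq_left h) hne
      by_contra hc'
      simp only [hsdef, Set.mem_setOf_eq, not_le] at hc'
      have ht0 : 0 ≤ ‖T f x‖ := norm_nonneg _
      rcases eq_or_lt_of_le ht0 with ht | ht
      · have hz : g x = 0 := by
          simp only [hgdef, ← ht, Real.zero_rpow hp.ne']
        rw [hxn, hz] at hlt
        rw [Real.zero_rpow hqp0.ne', mul_zero] at hlt
        exact absurd hlt (lt_irrefl 0)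
      · rw [hxn] at hlt
        simp only [hgdef] at hlt
        rw [← Real.rpow_mul ht0, mul_div_cancel₀ q hp.ne', ] at hlt
        -- hlt : cq * ‖T f x‖ ^ q < ‖T f x‖ ^ p
        have h5 : ‖T f x‖ ^ p = ‖T f x‖ ^ (p-q) * ‖T f x‖ ^ q := by
          rw [← Real.rpow_add ht]; ring_nf
        have h6 : ‖T f x‖ ^ (p-q) ≤ c ^ (p-q) :=
          Real.rpow_le_rpow ht0 hc'.le hpq.le
        have h8 : ‖T f x‖ ^ p ≤ cq * ‖T f x‖ ^ q := by
          rw [h5, hcqdef]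
          exact mul_le_mul_of_nonneg_right h6 (Real.rpow_nonneg ht0 _)
        linarith
    · right; exact hxn
  have hφbound : ∫ x, φ x ∂μ ≤ C * (N:ℝ)^((d:ℝ)*p - K) * L ^ p := by
    have e1 : ∫ x in u, φ x ∂μ = ∫ x, φ x ∂μ :=
      setIntegral_eq_integral_of_forall_compl_eq_zero fun x hx => not_not.mp hx
    have hle1 : μ.restrict u ≤ μ.restrict s :=
      calc μ.restrict u ≤ μ.restrict (s ∪ n) := Measure.restrict_mono husub le_rfl
        _ ≤ μ.restrict s + μ.restrict n := Measure.restrict_union_le s n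
        _ = μ.restrict s := by rw [Measure.restrict_eq_zero.2 hn0, add_zero]
    have hφints : Integrable φ (μ.restrict s) := hφint.mono_measure Measure.restrict_le_self
    have hgints : Integrable g (μ.restrict s) := hInt.mono_measure Measure.restrict_le_self
    have hrs : μ.restrict s = volume.restrict (torusBox r ∩ s) := by
      rw [hμdef, ← Measure.restrict_comm hbox, Measure.restrict_restrict hbox]
    calc ∫ x, φ x ∂μ = ∫ x in u, φ x ∂μ := e1.symm
      _ ≤ ∫ x, φ x ∂(μ.restrict s) :=
          integral_mono_measure hle1 (Filter.Eventually.of_forall hφ0) hφints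
      _ ≤ ∫ x, g x ∂(μ.restrict s) := by
          refine integral_mono_ae hφints hgints ?_
          filter_upwards [hgae.filter_mono (ae_mono Measure.restrict_le_self)] with x hx
          exact (hφle x).trans_eq hx
      _ ≤ C * (N:ℝ)^((d:ℝ)*p - K) * L ^ p := by rw [hrs]; exact h2
  have hcqeq : cq = (N:ℝ)^(((d:ℝ)-θ)*(p-q)) * L ^ (p-q) := by
    rw [hcqdef, hcdef, Real.mul_rpow (Real.rpow_nonneg hNpos.le _) hL0,
      ← Real.rpow_mul hNpos.le]
  have hNe : (N:ℝ)^(((d:ℝ)-θ)*(p-q)) * (N:ℝ)^((d:ℝ)*q - K + ε0) = (N:ℝ)^((d:ℝ)*p - K) := by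
    rw [← Real.rpow_add hNpos, hε0def]
    congr 1
    ring
  have A : cq * (max (Cε ε0) 0 * (N:ℝ)^((d:ℝ)*q - K + ε0) * S ^ q)
      = max (Cε ε0) 0 * (N:ℝ)^((d:ℝ)*p-K) * L^(p-q) * S^q := by
    rw [hcqeq, ← hNe]; ring
  have B : C * (N:ℝ)^((d:ℝ)*p - K) * L ^ p
      ≤ max C 0 * (N:ℝ)^((d:ℝ)*p-K) * L^(p-q) * S^q := by
    have hLp : L^p ≤ L^(p-q) * S^q := rpow_split hL0 hLS hq hqp
    have hNp : (0:ℝ) ≤ (N:ℝ)^((d:ℝ)*p-K) := Real.rpow_nonneg hNpos.le _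
    have hLp0 : (0:ℝ) ≤ L ^ p := Real.rpow_nonneg hL0 _
    calc C * (N:ℝ)^((d:ℝ)*p - K) * L ^ p
        ≤ max C 0 * (N:ℝ)^((d:ℝ)*p-K) * L^p :=
          mul_le_mul_of_nonneg_right (mul_le_mul_of_nonneg_right (le_max_left _ _) hNp) hLp0
      _ ≤ max C 0 * (N:ℝ)^((d:ℝ)*p-K) * (L^(p-q) * S^q) :=
          mul_le_mul_of_nonneg_left hLp (mul_nonneg (le_max_right _ _) hNp)
      _ = max C 0 * (N:ℝ)^((d:ℝ)*p-K) * L^(p-q) * S^q := by ring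
  calc (∫ x, g x ∂μ) = (∫ x, h' x ∂μ) + ∫ x, φ x ∂μ := hsplit
    _ ≤ max (Cε ε0) 0 * (N:ℝ)^((d:ℝ)*p-K) * L^(p-q) * S^q
        + max C 0 * (N:ℝ)^((d:ℝ)*p-K) * L^(p-q) * S^q :=
        add_le_add (hh'bound.trans_eq A) (hφbound.trans B)
    _ = (max (Cε ε0) 0 + max C 0) * (N : ℝ) ^ ((d : ℝ) * p - K) * L ^ (p - q) * S ^ q := by
        ring
end

section
/- Under the same hypotheses as the mixed-norm estimate (subcritical L^q bound with ε-loss and truncated L^p bound at threshold N^{d-θ}‖f‖_{L²[N]}), for any 0 < ν < (p/q − 1)θ and any f : [N]^d → C satisfying ‖f‖_∞ ≤ N^ν ‖f‖_{L²[N]}, one has ∫_{T^r} |Tf|^p dm ≤ C'' N^{dp - K} ‖f‖_{L²[N]}^p. -/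
open MeasureTheory Finset

theorem stmt11 (p q θ ν K : ℝ) (hθ : 0 < θ) (hq : 0 < q) (hqp : q < p)
    (hK : 1 ≤ K) (hν : 0 < ν) (hνθ : ν < (p / q - 1) * θ)
    (Cε : ℝ → ℝ) (C : ℝ) :
    ∃ C'' : ℝ, ∀ (d r N : ℕ), 1 ≤ d → 1 ≤ r → 1 ≤ N →
      ∀ T : ((Fin d → Fin N) → ℂ) → ((Fin r → ℝ) → ℂ),
      ∀ f : (Fin d → Fin N) → ℂ,
      (∀ ε : ℝ, 0 < ε →
        (∫ α in torusBox r, ‖T f α‖ ^ q)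
          ≤ Cε ε * (N : ℝ) ^ ((d : ℝ) * q - K + ε) * supN d N f ^ q) →
      ((∫ α in torusBox r ∩
            {α | (N : ℝ) ^ ((d : ℝ) - θ) * L2N d N f ≤ ‖T f α‖}, ‖T f α‖ ^ p)
          ≤ C * (N : ℝ) ^ ((d : ℝ) * p - K) * L2N d N f ^ p) →
      supN d N f ≤ (N : ℝ) ^ ν * L2N d N f →
      (∫ α in torusBox r, ‖T f α‖ ^ p)
        ≤ C'' * (N : ℝ) ^ ((d : ℝ) * p - K) * L2N d N f ^ p := by
  have hp : 0 < p := hq.trans hqp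
  have hpq : 0 < p - q := sub_pos.2 hqp
  set ε₀ : ℝ := θ * (p - q) - ν * q with hε₀def
  have hε₀ : 0 < ε₀ := by
    have h1 : ν * q < (p / q - 1) * θ * q := by
      exact mul_lt_mul_of_pos_right hνθ hq
    have h2 : (p / q - 1) * θ * q = θ * (p - q) := by
      field_simp
    rw [h2] at h1
    simp only [hε₀def]
    linarith
  refine ⟨|C| + |Cε ε₀|, ?_⟩
  intro d r N hd hr hN T f hLq hLp hsup
  set A : ℝ := (N : ℝ) with hA
  have hA1 : (1:ℝ) ≤ A := by rw [hA]; exact_mod_cast hN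
  have hA0 : (0:ℝ) < A := lt_of_lt_of_le one_pos hA1
  set L := L2N d N f with hL
  have hL0 : 0 ≤ L := Real.sqrt_nonneg _
  set S := supN d N f with hS
  have hS0 : 0 ≤ S := Real.iSup_nonneg fun n => norm_nonneg _
  set μ := volume.restrict (torusBox r) with hμ
  have hbox : MeasurableSet (torusBox r) :=
    MeasurableSet.univ_pi fun _ => measurableSet_Ioc
  set c : ℝ := A ^ ((d:ℝ) - θ) * L with hc
  have hc0 : 0 ≤ c := mul_nonneg (Real.rpow_nonneg hA0.le _) hL0
  have hRHS0 : 0 ≤ (|C| + |Cε ε₀|) * A ^ ((d:ℝ)*p - K) * L ^ p :=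
    mul_nonneg (mul_nonneg (by positivity) (Real.rpow_nonneg hA0.le _))
      (Real.rpow_nonneg hL0 _)
  by_cases hint : Integrable (fun α => ‖T f α‖ ^ p) μ
  swap
  · rw [show (∫ α, ‖T f α‖ ^ p ∂μ) = 0 from integral_undef hint]
    exact hRHS0
  -- integrable case
  have hF : AEMeasurable (fun α => ‖T f α‖) μ := by
    have heq : (fun α => ‖T f α‖) = fun α => (‖T f α‖ ^ p) ^ p⁻¹ := by
      funext α
      rw [Real.rpow_rpow_inv (norm_nonneg _) hp.ne']
    rw [heq]
    exact hint.aestronglyMeasurable.aemeasurable.pow aemeasurable_const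
  set F' := hF.mk _ with hF'def
  have hFF' : (fun α => ‖T f α‖) =ᵐ[μ] F' := hF.ae_eq_mk
  have hF'm : Measurable F' := hF.measurable_mk
  set s : Set (Fin r → ℝ) := {α | c ≤ F' α} with hsdef
  have hsm : MeasurableSet s := measurableSet_le measurable_const hF'm
  -- the q-power is integrable
  have hμfin : IsFiniteMeasure μ := by
    constructor
    rw [hμ, Measure.restrict_apply_univ, torusBox, volume_pi_pi]
    simp [Real.volume_Ioc]
  have hgm : AEStronglyMeasurable (fun α => ‖T f α‖ ^ q) μ :=
    (hF.pow aemeasurable_const).aestronglyMeasurable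
  have hgint : Integrable (fun α => ‖T f α‖ ^ q) μ := by
    refine ((integrable_const (1:ℝ)).add hint).mono' hgm ?_
    filter_upwards with α
    rw [Real.norm_eq_abs, abs_of_nonneg (Real.rpow_nonneg (norm_nonneg _) _)]
    have hp0 : (0:ℝ) ≤ ‖T f α‖ ^ p := Real.rpow_nonneg (norm_nonneg _) _
    simp only [Pi.add_apply]
    rcases le_total (‖T f α‖) 1 with h1 | h1
    · have := Real.rpow_le_one (norm_nonneg _) h1 hq.le
      linarith
    · have := Real.rpow_le_rpow_of_exponent_le h1 hqp.le
      linarith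
  -- split the integral
  have hsplit : (∫ α, ‖T f α‖ ^ p ∂μ)
      = (∫ α in s, ‖T f α‖ ^ p ∂μ) + ∫ α in sᶜ, ‖T f α‖ ^ p ∂μ :=
    (integral_add_compl hsm hint).symm
  -- the "exceptional" set where ‖T f α‖ ≠ F' α is null
  have hE : volume ({α | ¬ ‖T f α‖ = F' α} ∩ torusBox r) = 0 := by
    have h := hFF'
    rw [Filter.EventuallyEq, ae_iff, hμ, Measure.restrict_apply' hbox] at h
    exact h
  -- relate restriction to s with the hypothesis set
  have hμs : μ.restrict s = volume.restrict (torusBox r ∩ {α | c ≤ ‖T f α‖}) := by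
    rw [hμ, Measure.restrict_restrict hsm]
    apply Measure.restrict_congr_set
    rw [ae_eq_set]
    constructor
    · refine measure_mono_null ?_ hE
      rintro α ⟨⟨hα1, hα2⟩, hα3⟩
      refine ⟨fun heq => hα3 ⟨hα2, ?_⟩, hα2⟩
      show c ≤ ‖T f α‖
      rw [heq]; exact hα1
    · refine measure_mono_null ?_ hE
      rintro α ⟨⟨hα2, hα1⟩, hα3⟩
      refine ⟨fun heq => hα3 ⟨?_, hα2⟩, hα2⟩
      show c ≤ F' α
      rw [← heq]; exact hα1
  -- bound on the large part
  have hI1 : (∫ α in s, ‖T f α‖ ^ p ∂μ) ≤ |C| * A ^ ((d:ℝ)*p - K) * L ^ p := by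
    have h1 : (∫ α in s, ‖T f α‖ ^ p ∂μ)
        = ∫ α in torusBox r ∩ {α | c ≤ ‖T f α‖}, ‖T f α‖ ^ p := by
      rw [← hμs]
    rw [h1]
    refine le_trans hLp ?_
    refine mul_le_mul_of_nonneg_right
      (mul_le_mul_of_nonneg_right (le_abs_self C) (Real.rpow_nonneg hA0.le _))
      (Real.rpow_nonneg hL0 _)
  -- pointwise bound on the small part
  have hpoint : ∀ᵐ α ∂μ.restrict sᶜ, ‖T f α‖ ^ p ≤ c ^ (p - q) * ‖T f α‖ ^ q := by
    have h1 : ∀ᵐ α ∂μ.restrict sᶜ, ‖T f α‖ = F' α := ae_restrict_of_ae hFF'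
    have h2 : ∀ᵐ α ∂μ.restrict sᶜ, α ∈ sᶜ := ae_restrict_mem hsm.compl
    filter_upwards [h1, h2] with α hα1 hα2
    have hlt : ‖T f α‖ ≤ c := by
      rw [hα1]
      have : ¬ c ≤ F' α := hα2
      linarith [lt_of_not_ge this]
    have hsplitpow : ‖T f α‖ ^ p = ‖T f α‖ ^ (p - q) * ‖T f α‖ ^ q := by
      rw [← Real.rpow_add' (norm_nonneg _) (by simpa using hp.ne')]
      norm_num
    rw [hsplitpow]
    exact mul_le_mul_of_nonneg_right (Real.rpow_le_rpow (norm_nonneg _) hlt hpq.le)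
      (Real.rpow_nonneg (norm_nonneg _) _)
  -- bound on the small part
  have hI2 : (∫ α in sᶜ, ‖T f α‖ ^ p ∂μ)
      ≤ c ^ (p - q) * (Cε ε₀ * A ^ ((d:ℝ)*q - K + ε₀) * S ^ q) := by
    calc (∫ α in sᶜ, ‖T f α‖ ^ p ∂μ)
        ≤ ∫ α in sᶜ, c ^ (p - q) * ‖T f α‖ ^ q ∂μ :=
          integral_mono_ae hint.restrict ((hgint.restrict).const_mul _) hpoint
      _ = c ^ (p - q) * ∫ α in sᶜ, ‖T f α‖ ^ q ∂μ := integral_const_mul _ _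
      _ ≤ c ^ (p - q) * ∫ α, ‖T f α‖ ^ q ∂μ := by
          refine mul_le_mul_of_nonneg_left ?_ (Real.rpow_nonneg hc0 _)
          exact setIntegral_le_integral hgint
            (Filter.Eventually.of_forall fun α => Real.rpow_nonneg (norm_nonneg _) _)
      _ ≤ c ^ (p - q) * (Cε ε₀ * A ^ ((d:ℝ)*q - K + ε₀) * S ^ q) :=
          mul_le_mul_of_nonneg_left (hLq ε₀ hε₀) (Real.rpow_nonneg hc0 _)
  -- the key algebraic estimate
  have hkey : c ^ (p - q) * (Cε ε₀ * A ^ ((d:ℝ)*q - K + ε₀) * S ^ q)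
      ≤ |Cε ε₀| * A ^ ((d:ℝ)*p - K) * L ^ p := by
    have e1 : c ^ (p - q) = A ^ (((d:ℝ) - θ) * (p - q)) * L ^ (p - q) := by
      rw [hc, Real.mul_rpow (Real.rpow_nonneg hA0.le _) hL0, ← Real.rpow_mul hA0.le]
    have e2 : (A ^ ν * L) ^ q = A ^ (ν * q) * L ^ q := by
      rw [Real.mul_rpow (Real.rpow_nonneg hA0.le _) hL0, ← Real.rpow_mul hA0.le]
    have e3 : A ^ (((d:ℝ) - θ) * (p - q)) * A ^ ((d:ℝ)*q - K + ε₀) * A ^ (ν * q)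
        = A ^ ((d:ℝ)*p - K) := by
      rw [← Real.rpow_add hA0, ← Real.rpow_add hA0]
      congr 1
      simp only [hε₀def]
      ring
    have e4 : L ^ (p - q) * L ^ q = L ^ p := by
      rw [← Real.rpow_add' hL0 (by simpa using hp.ne')]
      norm_num
    have hstep : Cε ε₀ * A ^ ((d:ℝ)*q - K + ε₀) * S ^ q
        ≤ |Cε ε₀| * A ^ ((d:ℝ)*q - K + ε₀) * (A ^ ν * L) ^ q := by
      refine mul_le_mul
        (mul_le_mul_of_nonneg_right (le_abs_self _) (Real.rpow_nonneg hA0.le _))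
        (Real.rpow_le_rpow hS0 hsup hq.le) (Real.rpow_nonneg hS0 _) ?_
      positivity
    calc c ^ (p - q) * (Cε ε₀ * A ^ ((d:ℝ)*q - K + ε₀) * S ^ q)
        ≤ c ^ (p - q) * (|Cε ε₀| * A ^ ((d:ℝ)*q - K + ε₀) * (A ^ ν * L) ^ q) :=
          mul_le_mul_of_nonneg_left hstep (Real.rpow_nonneg hc0 _)
      _ = |Cε ε₀| * (A ^ (((d:ℝ) - θ) * (p - q)) * A ^ ((d:ℝ)*q - K + ε₀) * A ^ (ν * q))
            * (L ^ (p - q) * L ^ q) := by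
          rw [e1, e2]; ring
      _ = |Cε ε₀| * A ^ ((d:ℝ)*p - K) * L ^ p := by rw [e3, e4]
  calc (∫ α, ‖T f α‖ ^ p ∂μ)
      = (∫ α in s, ‖T f α‖ ^ p ∂μ) + ∫ α in sᶜ, ‖T f α‖ ^ p ∂μ := hsplit
    _ ≤ |C| * A ^ ((d:ℝ)*p - K) * L ^ p + |Cε ε₀| * A ^ ((d:ℝ)*p - K) * L ^ p :=
        add_le_add hI1 (hI2.trans hkey)
    _ = (|C| + |Cε ε₀|) * A ^ ((d:ℝ)*p - K) * L ^ p := by ring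
end

section
/- Let N ≥ 1, let B be a finite σ-algebra (factor) on [N]^d whose atoms are sets Q₁,…,Q_ℓ, Ξ with |Ξ| ≤ N^{d-c} for some c > 0, and let A ⊆ [N]^d have density δ = |A|/N^d. Write f_A = 1_A − δ1_{[N]^d}, and suppose κδ ≤ ‖E[f_A 1_{Ξ^c} | B]‖_{L²[N]} where ‖g‖_{L²[N]}² = N^{-d}Σ_{n∈[N]^d}|g(n)|². Then max_i |A ∩ Q_i|/|Q_i| ≥ (1 + κ²/2)δ − C·δ^{-1}N^{-c} for an absolute constant C; in particular, if N^{-c} ≤ κ²δ²/(4C) then some atom Q_i satisfies |A ∩ Q_i|/|Q_i| ≥ (1 + κ²/4)δ. -/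
open Finset

/-- The discrete box `[N]^d`. -/
def boxN (d N : ℕ) : Finset (Fin d → ℕ) :=
  Fintype.piFinset fun _ : Fin d => Finset.Icc 1 N

set_option maxHeartbeats 4000000 in
theorem stmt17 :
    ∃ C : ℝ, 0 < C ∧
      ∀ (d N l : ℕ), 1 ≤ d → 1 ≤ N → ∀ c : ℝ, 0 < c →
      ∀ (Q : Fin l → Finset (Fin d → ℕ)) (Ξ A : Finset (Fin d → ℕ))
        (δ κ : ℝ) (g : (Fin d → ℕ) → ℝ),
      -- the atoms `Q i`, `Ξ` partition the box `[N]^d`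
      boxN d N = Ξ ∪ Finset.univ.biUnion Q →
      (∀ i j, i ≠ j → Disjoint (Q i) (Q j)) →
      (∀ i, Disjoint (Q i) Ξ) →
      (∀ i, (Q i).Nonempty) →
      -- the exceptional atom is small
      (Ξ.card : ℝ) ≤ (N : ℝ) ^ ((d : ℝ) - c) →
      -- `A` has density `δ` in the box
      A ⊆ boxN d N → δ = (A.card : ℝ) / (N : ℝ) ^ (d : ℕ) → 0 < δ → 0 < κ →
      -- `g = E[f_A 1_{Ξᶜ} | B]` is the conditioned balanced function
      (∀ n, g n = ∑ i, if n ∈ Q i then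
          (∑ m ∈ Q i, ((if m ∈ A then (1:ℝ) else 0)
            - δ * (if m ∈ boxN d N then (1:ℝ) else 0))) / (Q i).card
        else 0) →
      -- the `L²` lower bound hypothesis
      κ * δ ≤ Real.sqrt ((N : ℝ) ^ (-(d : ℝ)) * ∑ n ∈ boxN d N, g n ^ 2) →
      -- conclusions
      (∃ i, (1 + κ ^ 2 / 2) * δ - C * δ⁻¹ * (N : ℝ) ^ (-c)
          ≤ ((A ∩ Q i).card : ℝ) / (Q i).card) ∧
      ((N : ℝ) ^ (-c) ≤ κ ^ 2 * δ ^ 2 / (4 * C) →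
        ∃ i, (1 + κ ^ 2 / 4) * δ ≤ ((A ∩ Q i).card : ℝ) / (Q i).card) := by
  refine ⟨2, by norm_num, ?_⟩
  intro d N l hd hN c hc Q Ξ A δ κ g hpart hdisj hdisjΞ hQne hΞcard hAsub hδdef hδpos hκpos
    hg hL2
  have hNpos : (0:ℝ) < (N:ℝ) := by exact_mod_cast hN
  have hNd : (0:ℝ) < (N:ℝ)^(d:ℕ) := by positivity
  have hboxcard : ((boxN d N).card : ℝ) = (N:ℝ)^(d:ℕ) := by
    have : (boxN d N).card = N ^ d := by
      simp [boxN, Fintype.card_piFinset, Nat.card_Icc]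
    rw [this]; push_cast; ring
  have hA : (A.card : ℝ) = δ * (N:ℝ)^(d:ℕ) := by
    rw [hδdef]; field_simp
  have hδ1 : δ ≤ 1 := by
    have h1 : (A.card : ℝ) ≤ ((boxN d N).card : ℝ) := by
      exact_mod_cast Finset.card_le_card hAsub
    rw [hboxcard] at h1
    rw [hδdef]
    rw [div_le_one hNd]
    exact h1
  -- l ≥ 1
  rcases Nat.eq_zero_or_pos l with hl0 | hlpos
  · exfalso
    subst hl0
    have hg0 : ∀ n, g n = 0 := fun n => by simpa using hg n
    have hz : Real.sqrt ((N:ℝ)^(-(d:ℝ)) * ∑ n ∈ boxN d N, g n ^ 2) = 0 := by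
      simp [hg0]
    rw [hz] at hL2
    linarith [mul_pos hκpos hδpos]
  -- notation
  set a : Fin l → ℝ := fun i => ((A ∩ Q i).card : ℝ) with ha
  set w : Fin l → ℝ := fun i => ((Q i).card : ℝ) with hw
  have hwpos : ∀ i, 0 < w i := fun i => by
    simpa [hw] using Finset.card_pos.mpr (hQne i)
  have hanonneg : ∀ i, 0 ≤ a i := fun i => by simp [ha]
  have hdisjU : Disjoint Ξ (Finset.univ.biUnion Q) :=
    (Finset.disjoint_biUnion_right _ _ _).mpr fun i _ => (hdisjΞ i).symm
  have hQsub : ∀ i, Q i ⊆ boxN d N := by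
    intro i
    rw [hpart]
    exact (Finset.subset_biUnion_of_mem Q (mem_univ i)).trans Finset.subset_union_right
  -- inner sum
  have hinner : ∀ i, (∑ m ∈ Q i, ((if m ∈ A then (1:ℝ) else 0)
      - δ * (if m ∈ boxN d N then (1:ℝ) else 0))) = a i - δ * w i := by
    intro i
    rw [Finset.sum_sub_distrib, ← Finset.mul_sum]
    congr 1
    · rw [Finset.sum_boole, Finset.filter_mem_eq_inter, Finset.inter_comm]
    · congr 1
      rw [Finset.sum_congr rfl (fun m hm => if_pos (hQsub i hm)), Finset.sum_const,
        nsmul_eq_mul, mul_one]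
  -- g on atoms
  have hg_in : ∀ i, ∀ n ∈ Q i, g n = (a i - δ * w i) / w i := by
    intro i n hn
    rw [hg n, Finset.sum_eq_single i]
    · rw [if_pos hn, hinner i]
    · intro j _ hj
      rw [if_neg]
      exact fun hnj => Finset.disjoint_left.mp (hdisj j i hj) hnj hn
    · simp
  have hg_out : ∀ n ∈ Ξ, g n = 0 := by
    intro n hn
    rw [hg n]
    refine Finset.sum_eq_zero fun i _ => ?_
    rw [if_neg]
    exact fun hni => Finset.disjoint_left.mp (hdisjΞ i) hni hn
  -- decompose the sum
  have hsplit : ∑ n ∈ boxN d N, g n ^ 2 = ∑ i, w i * ((a i - δ * w i) / w i)^2 := by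
    rw [hpart, Finset.sum_union hdisjU,
      Finset.sum_eq_zero (fun n hn => by rw [hg_out n hn]; ring),
      Finset.sum_biUnion (fun i _ j _ hij => hdisj i j hij), zero_add]
    refine Finset.sum_congr rfl fun i _ => ?_
    rw [Finset.sum_congr rfl (fun n hn => by rw [hg_in i n hn]), Finset.sum_const,
      nsmul_eq_mul]
  -- L² lower bound
  have hTnn : (0:ℝ) ≤ (N:ℝ)^(-(d:ℝ)) * ∑ n ∈ boxN d N, g n ^ 2 := by
    rw [hsplit]
    have : (0:ℝ) ≤ ∑ i, w i * ((a i - δ * w i) / w i)^2 :=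
      Finset.sum_nonneg fun i _ => mul_nonneg (hwpos i).le (sq_nonneg _)
    exact mul_nonneg (Real.rpow_nonneg hNpos.le _) this
  have hsq : (κ*δ)^2 ≤ (N:ℝ)^(-(d:ℝ)) * ∑ n ∈ boxN d N, g n ^ 2 := by
    calc (κ*δ)^2 ≤ (Real.sqrt ((N:ℝ)^(-(d:ℝ)) * ∑ n ∈ boxN d N, g n ^ 2))^2 :=
        pow_le_pow_left₀ (mul_pos hκpos hδpos).le hL2 2
      _ = _ := Real.sq_sqrt hTnn
  have hrw : (N:ℝ)^(-(d:ℝ)) = ((N:ℝ)^(d:ℕ))⁻¹ := by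
    rw [Real.rpow_neg hNpos.le, Real.rpow_natCast]
  have hT : κ^2*δ^2*((N:ℝ)^(d:ℕ)) ≤ ∑ i, w i * ((a i - δ * w i) / w i)^2 := by
    rw [hsplit, hrw, inv_mul_eq_div, le_div_iff₀ hNd] at hsq
    linarith [hsq]
  -- the maximal atom
  have hlne : (Finset.univ : Finset (Fin l)).Nonempty := by
    haveI : NeZero l := ⟨hlpos.ne'⟩
    exact univ_nonempty
  obtain ⟨i0, -, hmax⟩ := Finset.exists_max_image Finset.univ (fun i => a i / w i) hlne
  set M := a i0 / w i0 with hMdef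
  have hM0 : 0 ≤ M := div_nonneg (hanonneg i0) (hwpos i0).le
  -- per-atom bound
  have hterm : ∀ i, w i * ((a i - δ * w i) / w i)^2 ≤ a i * (M - δ) - δ * (a i - δ * w i) := by
    intro i
    have hwi := hwpos i
    have hα : a i / w i * w i = a i := div_mul_cancel₀ _ hwi.ne'
    have hαM : a i / w i ≤ M := hmax i (mem_univ i)
    have han := hanonneg i
    have key : w i * ((a i - δ * w i) / w i)^2 = (a i / w i - δ) * (a i - δ * w i) := by
      field_simp
    have h5 : (a i / w i - δ) * (a i - δ * w i)
        = a i * (a i / w i) - 2*δ*(a i) + δ^2 * w i := by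
      linear_combination (-δ) * hα
    have h6 : 0 ≤ a i * (M - a i / w i) := mul_nonneg han (sub_nonneg.mpr hαM)
    have h7 : a i * (M - a i / w i) = a i * M - a i * (a i / w i) := by ring
    rw [key, h5]
    linarith [h6, h7]
  have hTle : (∑ i, w i * ((a i - δ * w i) / w i)^2)
      ≤ (M - δ) * (∑ i, a i) - δ * ((∑ i, a i) - δ * (∑ i, w i)) := by
    calc (∑ i, w i * ((a i - δ * w i) / w i)^2)
        ≤ ∑ i, (a i * (M - δ) - δ * (a i - δ * w i)) :=
          Finset.sum_le_sum fun i _ => hterm i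
      _ = _ := by
          rw [Finset.sum_sub_distrib, ← Finset.sum_mul, ← Finset.mul_sum,
            Finset.sum_sub_distrib, ← Finset.mul_sum]
          ring
  -- cardinality identities
  have hWcard : (∑ i, w i) + (Ξ.card : ℝ) = (N:ℝ)^(d:ℕ) := by
    have h1 : (boxN d N).card = Ξ.card + ∑ i, (Q i).card := by
      rw [hpart, Finset.card_union_of_disjoint hdisjU,
        Finset.card_biUnion (fun i _ j _ hij => hdisj i j hij)]
    have h2 : ((boxN d N).card : ℝ) = (Ξ.card : ℝ) + ∑ i, w i := by
      rw [h1]; push_cast [hw]; ring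
    rw [← hboxcard, h2]; ring
  have hAcard : (∑ i, a i) + ((A ∩ Ξ).card : ℝ) = (A.card : ℝ) := by
    have h1 : A = (A ∩ Ξ) ∪ Finset.univ.biUnion (fun i => A ∩ Q i) := by
      conv_lhs => rw [← Finset.inter_eq_left.mpr hAsub, hpart]
      rw [Finset.inter_union_distrib_left, Finset.inter_biUnion]
    have hdisj2 : Disjoint (A ∩ Ξ) (Finset.univ.biUnion (fun i => A ∩ Q i)) :=
      (Finset.disjoint_biUnion_right _ _ _).mpr fun i _ =>
        Finset.disjoint_of_subset_left Finset.inter_subset_right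
          (Finset.disjoint_of_subset_right Finset.inter_subset_right (hdisjΞ i).symm)
    have h2 : A.card = (A ∩ Ξ).card + ∑ i, (A ∩ Q i).card := by
      conv_lhs => rw [h1]
      rw [Finset.card_union_of_disjoint hdisj2,
        Finset.card_biUnion (fun i _ j _ hij =>
          Finset.disjoint_of_subset_left Finset.inter_subset_right
            (Finset.disjoint_of_subset_right Finset.inter_subset_right (hdisj i j hij)))]
    rw [h2]; push_cast [ha]; ring
  -- error bounds
  set e := (N:ℝ)^(-c) with he_def
  have hepos : 0 < e := Real.rpow_pos_of_pos hNpos _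
  have hΞe : (Ξ.card : ℝ) ≤ (N:ℝ)^(d:ℕ) * e := by
    calc (Ξ.card : ℝ) ≤ (N:ℝ)^((d:ℝ) - c) := hΞcard
      _ = (N:ℝ)^(d:ℕ) * e := by
        rw [he_def, sub_eq_add_neg, Real.rpow_add hNpos, Real.rpow_natCast]
  have hAΞ : ((A ∩ Ξ).card : ℝ) ≤ (Ξ.card : ℝ) := by
    exact_mod_cast Finset.card_le_card Finset.inter_subset_right
  have hAΞ0 : (0:ℝ) ≤ ((A ∩ Ξ).card : ℝ) := Nat.cast_nonneg _
  have hΞ0 : (0:ℝ) ≤ (Ξ.card : ℝ) := Nat.cast_nonneg _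
  have hSaM : (∑ i, a i) ≤ M * (∑ i, w i) := by
    rw [Finset.mul_sum]
    refine Finset.sum_le_sum fun i _ => ?_
    have hα : a i / w i * w i = a i := div_mul_cancel₀ _ (hwpos i).ne'
    have := mul_le_mul_of_nonneg_right (hmax i (mem_univ i)) (hwpos i).le
    linarith [this, hα]
  have hSa0 : (0:ℝ) ≤ ∑ i, a i := Finset.sum_nonneg fun i _ => hanonneg i
  have hδinv1 : (1:ℝ) ≤ δ⁻¹ := (one_le_inv₀ hδpos).mpr hδ1
  have hinv : δ * δ⁻¹ = 1 := mul_inv_cancel₀ hδpos.ne'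
  -- the two cases
  have hkey : κ^2*δ^2*((N:ℝ)^(d:ℕ))
      ≤ (M - δ) * (∑ i, a i) + δ * ((A ∩ Ξ).card : ℝ) - δ^2 * (Ξ.card : ℝ) := by
    have hSa : (∑ i, a i) = δ * (N:ℝ)^(d:ℕ) - ((A ∩ Ξ).card : ℝ) := by
      rw [← hA]; linarith [hAcard]
    have hW : (∑ i, w i) = (N:ℝ)^(d:ℕ) - (Ξ.card : ℝ) := by linarith [hWcard]
    calc κ^2*δ^2*((N:ℝ)^(d:ℕ)) ≤ (∑ i, w i * ((a i - δ * w i) / w i)^2) := hT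
      _ ≤ (M - δ) * (∑ i, a i) - δ * ((∑ i, a i) - δ * (∑ i, w i)) := hTle
      _ = (M - δ) * (∑ i, a i) + δ * ((A ∩ Ξ).card : ℝ) - δ^2 * (Ξ.card : ℝ) := by
          rw [hSa, hW]; ring
  have goal1 : (1 + κ^2/2)*δ - 2*δ⁻¹*e ≤ M := by
    rcases le_or_gt δ M with hMδ | hMδ
    · -- M ≥ δ
      have hSale : (∑ i, a i) ≤ δ * (N:ℝ)^(d:ℕ) := by
        rw [← hA]; linarith [hAcard]
      have h1 : κ^2*δ^2*((N:ℝ)^(d:ℕ)) ≤ ((M - δ)*δ + δ*e) * ((N:ℝ)^(d:ℕ)) := by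
        have hm : (M - δ) * (∑ i, a i) ≤ (M - δ) * (δ * (N:ℝ)^(d:ℕ)) :=
          mul_le_mul_of_nonneg_left hSale (by linarith)
        have p1 : δ * ((A ∩ Ξ).card : ℝ) ≤ δ * (Ξ.card : ℝ) :=
          mul_le_mul_of_nonneg_left hAΞ hδpos.le
        have p2 : δ * (Ξ.card : ℝ) ≤ δ * ((N:ℝ)^(d:ℕ) * e) :=
          mul_le_mul_of_nonneg_left hΞe hδpos.le
        have p3 : 0 ≤ δ^2 * (Ξ.card : ℝ) := mul_nonneg (sq_nonneg δ) hΞ0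
        linarith [hkey, hm, p1, p2, p3]
      have h2 : κ^2*δ^2 ≤ (M - δ)*δ + δ*e := le_of_mul_le_mul_right h1 hNd
      have h3 : κ^2*δ ≤ (M - δ) + e := by
        have h4 : κ^2*δ*δ ≤ ((M - δ) + e)*δ := by linarith [h2]
        exact le_of_mul_le_mul_right h4 hδpos
      linarith [h3, mul_nonneg (sub_nonneg.mpr hδinv1) hepos.le,
        mul_nonneg (sq_nonneg κ) hδpos.le, hepos.le]
    · -- M < δ
      have h1 : κ^2*δ^2*((N:ℝ)^(d:ℕ)) ≤ (δ*e) * ((N:ℝ)^(d:ℕ)) := by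
        have hm : (M - δ) * (∑ i, a i) ≤ 0 :=
          mul_nonpos_of_nonpos_of_nonneg (by linarith) hSa0
        have p1 : δ * ((A ∩ Ξ).card : ℝ) ≤ δ * (Ξ.card : ℝ) :=
          mul_le_mul_of_nonneg_left hAΞ hδpos.le
        have p2 : δ * (Ξ.card : ℝ) ≤ δ * ((N:ℝ)^(d:ℕ) * e) :=
          mul_le_mul_of_nonneg_left hΞe hδpos.le
        have p3 : 0 ≤ δ^2 * (Ξ.card : ℝ) := mul_nonneg (sq_nonneg δ) hΞ0
        linarith [hkey, hm, p1, p2, p3]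
      have h2 : κ^2*δ^2 ≤ δ*e := le_of_mul_le_mul_right h1 hNd
      have h3 : κ^2*δ ≤ e := by
        have h4 : κ^2*δ*δ ≤ e*δ := by linarith [h2]
        exact le_of_mul_le_mul_right h4 hδpos
      have hMge : δ - e ≤ M := by
        have h5 : (δ - e) * ((N:ℝ)^(d:ℕ)) ≤ M * ((N:ℝ)^(d:ℕ)) := by
          have hSage : δ * (N:ℝ)^(d:ℕ) - (N:ℝ)^(d:ℕ)*e ≤ (∑ i, a i) := by
            have : (∑ i, a i) = δ * (N:ℝ)^(d:ℕ) - ((A ∩ Ξ).card : ℝ) := by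
              rw [← hA]; linarith [hAcard]
            linarith [hAΞ, hΞe, this]
          have hWle : (∑ i, w i) ≤ (N:ℝ)^(d:ℕ) := by linarith [hWcard, hΞ0]
          linarith [hSage, hSaM, mul_le_mul_of_nonneg_left hWle hM0]
        exact le_of_mul_le_mul_right h5 hNd
      linarith [h3, hMge, mul_nonneg (sub_nonneg.mpr hδinv1) hepos.le, hepos.le]
  refine ⟨⟨i0, goal1⟩, fun hsmall => ⟨i0, ?_⟩⟩
  have h2 : 2*δ⁻¹*e ≤ κ^2*δ/4 := by
    have h3 : e ≤ κ^2*δ^2/8 := by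
      rw [he_def] at hsmall ⊢
      linarith [hsmall]
    calc 2*δ⁻¹*e ≤ 2*δ⁻¹*(κ^2*δ^2/8) := by
          have := mul_le_mul_of_nonneg_left h3 (mul_nonneg (by norm_num) (inv_nonneg.mpr hδpos.le) : (0:ℝ) ≤ 2*δ⁻¹)
          linarith [this]
      _ = κ^2*δ/4 * (δ⁻¹*δ) := by ring
      _ = κ^2*δ/4 := by rw [inv_mul_cancel₀ hδpos.ne', mul_one]
  linarith [goal1]
end

section
/- Let λ₁,…,λ_s be nonzero integers with λ₁ + … + λ_s = 0, such that at least two are positive and at least two are negative. Define the (s−1)×(s−1) integer matrix A = [λ_j(λ_k + δ_{jk}λ_s)]_{j,k ∈ [s−1]}. Then the quadratic form z ↦ zᵀAz on R^{s−1} is indefinite of rank s − 2. -/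
open Matrix

theorem stmt19 (n : ℕ) (lam : Fin (n + 1) → ℤ)
    (hne : ∀ i, lam i ≠ 0)
    (hsum : ∑ i, lam i = 0)
    (hpos : ∃ i j : Fin (n + 1), i ≠ j ∧ 0 < lam i ∧ 0 < lam j)
    (hneg : ∃ i j : Fin (n + 1), i ≠ j ∧ lam i < 0 ∧ lam j < 0)
    (A : Matrix (Fin n) (Fin n) ℝ)
    (hA : ∀ j k : Fin n,
      A j k = (lam j.castSucc : ℝ) *
        ((lam k.castSucc : ℝ) + if j = k then (lam (Fin.last n) : ℝ) else 0)) :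
    A.rank = n - 1 ∧
    (∃ x : Fin n → ℝ, 0 < x ⬝ᵥ A.mulVec x) ∧
    (∃ y : Fin n → ℝ, y ⬝ᵥ A.mulVec y < 0) := by
  set l : Fin n → ℝ := fun j => (lam j.castSucc : ℝ) with hl
  set L : ℝ := (lam (Fin.last n) : ℝ) with hL
  have hlne : ∀ j, l j ≠ 0 := fun j => Int.cast_ne_zero.mpr (hne _)
  have hLne : L ≠ 0 := Int.cast_ne_zero.mpr (hne _)
  have hsl : (∑ j, l j) = -L := by
    have h0 : (∑ i, (lam i : ℝ)) = 0 := by exact_mod_cast hsum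
    rw [Fin.sum_univ_castSucc] at h0
    simp only [hl, hL]
    linarith
  -- quadratic form formula
  have hinner : ∀ z : Fin n → ℝ, ∀ j, A.mulVec z j = l j * ((∑ k, l k * z k) + L * z j) := by
    intro z j
    simp only [mulVec, dotProduct, hA]
    rw [mul_add, Finset.mul_sum,
      show l j * (L * z j) = ∑ k, if j = k then l j * (L * z k) else 0 by simp,
      ← Finset.sum_add_distrib]
    exact Finset.sum_congr rfl fun k _ => by split_ifs <;> ring
  have hquad : ∀ z : Fin n → ℝ, z ⬝ᵥ A.mulVec z
      = (∑ j, l j * z j) ^ 2 + L * ∑ j, l j * z j ^ 2 := by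
    intro z
    simp only [dotProduct, hinner]
    have : ∑ j, z j * (l j * ((∑ k, l k * z k) + L * z j))
        = (∑ k, l k * z k) * (∑ j, l j * z j) + L * ∑ j, l j * z j ^ 2 := by
      rw [Finset.mul_sum, Finset.mul_sum, ← Finset.sum_add_distrib]
      exact Finset.sum_congr rfl fun j _ => by ring
    rw [this]; ring
  -- find witness indices
  set M : ℤ := lam (Fin.last n) with hM
  have hMne : M ≠ 0 := hne _
  have key : ∃ a b c : Fin (n + 1), a ≠ b ∧ lam a * M < 0 ∧ lam b * M < 0 ∧
      0 < lam c * M ∧ c ≠ Fin.last n := by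
    obtain ⟨i, j, hij, hi, hj⟩ := hpos
    obtain ⟨i', j', hij', hi', hj'⟩ := hneg
    rcases hMne.lt_or_gt with hMneg | hMpos
    · refine ⟨i, j, if i' = Fin.last n then j' else i', hij, by nlinarith, by nlinarith, ?_, ?_⟩
      · split_ifs <;> nlinarith
      · split_ifs with h
        · intro hcontra; exact hij' (h ▸ hcontra ▸ rfl)
        · exact h
    · refine ⟨i', j', if i = Fin.last n then j else i, hij', by nlinarith, by nlinarith, ?_, ?_⟩
      · split_ifs <;> nlinarith
      · split_ifs with h
        · intro hcontra; exact hij (h ▸ hcontra ▸ rfl)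
        · exact h
  obtain ⟨a, b, c, hab, ha, hb, hc, hclast⟩ := key
  have halast : a ≠ Fin.last n := fun h => by rw [h, ← hM] at ha; nlinarith
  have hblast : b ≠ Fin.last n := fun h => by rw [h, ← hM] at hb; nlinarith
  set a' : Fin n := a.castPred halast with ha'
  set b' : Fin n := b.castPred hblast with hb'
  set c' : Fin n := c.castPred hclast with hc'
  have hla : l a' * L < 0 := by
    have : ((lam a * M : ℤ) : ℝ) < 0 := by exact_mod_cast ha
    push_cast at this
    simpa [hl, hL, ha', Fin.castSucc_castPred] using this
  have hlb : l b' * L < 0 := by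
    have : ((lam b * M : ℤ) : ℝ) < 0 := by exact_mod_cast hb
    push_cast at this
    simpa [hl, hL, hb', Fin.castSucc_castPred] using this
  have hlc : 0 < l c' * L := by
    have : (0 : ℝ) < ((lam c * M : ℤ) : ℝ) := by exact_mod_cast hc
    push_cast at this
    simpa [hl, hL, hc', Fin.castSucc_castPred] using this
  have hab' : a' ≠ b' := by
    intro h
    apply hab
    have := congrArg Fin.castSucc h
    rwa [ha', hb', Fin.castSucc_castPred, Fin.castSucc_castPred] at this
  -- helper: sums of functions supported at two points
  have htwo : ∀ f : Fin n → ℝ, (∀ j, j ≠ a' → j ≠ b' → f j = 0) →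
      ∑ j, f j = f a' + f b' := by
    intro f hf
    rw [← Finset.sum_subset (Finset.subset_univ {a', b'})]
    · rw [Finset.sum_pair hab']
    · intro x _ hx
      simp only [Finset.mem_insert, Finset.mem_singleton, not_or] at hx
      exact hf x hx.1 hx.2
  refine ⟨?_, ?_, ?_⟩
  · -- rank
    have hn : 0 < n := Fin.pos_iff_nonempty.mpr ⟨a'⟩
    classical
    set C : Matrix (Fin n) (Fin n) ℝ := Matrix.of (fun _ k => l k) + L • 1 with hCdef
    have hCapp : ∀ j k, C j k = l k + if j = k then L else 0 := by
      intro j k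
      simp [hCdef, Matrix.one_apply, mul_ite]
    have hAC : A = Matrix.diagonal l * C := by
      ext j k
      rw [Matrix.diagonal_mul, hCapp, hA]
    have hdet : IsUnit (Matrix.diagonal l).det := by
      rw [Matrix.det_diagonal]
      exact isUnit_iff_ne_zero.mpr (Finset.prod_ne_zero_iff.mpr fun j _ => hlne j)
    rw [hAC, Matrix.rank_mul_eq_right_of_isUnit_det _ _ hdet]
    have hCmul : ∀ x : Fin n → ℝ, ∀ j, C.mulVec x j = (∑ k, l k * x k) + L * x j := by
      intro x j
      simp only [mulVec, dotProduct, hCapp]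
      rw [Finset.sum_congr rfl (fun k _ => show (l k + if j = k then L else 0) * x k
            = l k * x k + if j = k then L * x k else 0 from by split_ifs <;> ring),
        Finset.sum_add_distrib]
      simp
    have hker : LinearMap.ker C.mulVecLin = Submodule.span ℝ {(fun _ => 1 : Fin n → ℝ)} := by
      ext x
      simp only [LinearMap.mem_ker, Matrix.mulVecLin_apply, Submodule.mem_span_singleton]
      constructor
      · intro hx
        refine ⟨-(∑ k, l k * x k) / L, funext fun j => ?_⟩
        have hj := congrFun hx j
        rw [hCmul] at hj
        simp only [Pi.zero_apply] at hj
        simp only [Pi.smul_apply, smul_eq_mul, mul_one]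
        field_simp
        linarith
      · rintro ⟨d, rfl⟩
        funext j
        rw [hCmul]
        simp only [Pi.smul_apply, smul_eq_mul, mul_one, Pi.zero_apply]
        rw [← Finset.sum_mul, hsl]
        ring
    have hone : (fun _ => 1 : Fin n → ℝ) ≠ 0 := by
      intro h
      have := congrFun h ⟨0, hn⟩
      simp at this
    have hkdim : Module.finrank ℝ (LinearMap.ker C.mulVecLin) = 1 := by
      rw [hker]
      exact finrank_span_singleton hone
    have hrn := LinearMap.finrank_range_add_finrank_ker C.mulVecLin
    rw [hkdim, Module.finrank_pi] at hrn
    have hcr : C.rank + 1 = n := by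
      rw [Matrix.rank]
      simpa using hrn
    omega
  · -- positive witness
    refine ⟨fun j => if j = c' then 1 else 0, ?_⟩
    rw [hquad]
    have h1 : (∑ j, l j * (if j = c' then (1:ℝ) else 0)) = l c' := by
      simp [mul_ite, Finset.sum_ite_eq']
    have h2 : (∑ j, l j * (if j = c' then (1:ℝ) else 0) ^ 2) = l c' := by
      have : ∀ j, l j * (if j = c' then (1:ℝ) else 0) ^ 2
          = if j = c' then l j else 0 := fun j => by split_ifs <;> ring
      simp only [this, Finset.sum_ite_eq', Finset.mem_univ, if_true]
    rw [h1, h2]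
    nlinarith [sq_nonneg (l c')]
  · -- negative witness
    set y : Fin n → ℝ := fun j => if j = a' then 1 / l a' else if j = b' then -(1 / l b') else 0
      with hy
    refine ⟨y, ?_⟩
    rw [hquad]
    have hya : y a' = 1 / l a' := by simp [hy]
    have hyb : y b' = -(1 / l b') := by simp [hy, hab'.symm]
    have h1 : (∑ j, l j * y j) = 0 := by
      rw [htwo _ (fun j hj1 hj2 => by simp [hy, hj1, hj2])]
      rw [hya, hyb]
      field_simp [hlne a', hlne b']
      norm_num
    have h2 : (∑ j, l j * y j ^ 2) = 1 / l a' + 1 / l b' := by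
      rw [htwo _ (fun j hj1 hj2 => by simp [hy, hj1, hj2])]
      rw [hya, hyb]
      field_simp [hlne a', hlne b']
    rw [h1, h2]
    have hterm : ∀ u : Fin n, l u * L < 0 → L * (1 / l u) < 0 := by
      intro u hu
      rcases mul_neg_iff.mp hu with ⟨h1, h2⟩ | ⟨h1, h2⟩
      · exact mul_neg_of_neg_of_pos h2 (by positivity)
      · exact mul_neg_of_pos_of_neg h2 (by simpa using one_div_neg.mpr h1)
    have := hterm a' hla
    have := hterm b' hlb
    nlinarith
end
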